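/- arXiv:1305.3124 — 8 statements merged into one kernel-verified Lean document; each statement's English description precedes it below -/
import Mathlib

section
/- Let E be a vector bundle over M with connection ∇ and ρ : E → TM a morphism of vector bundles, and define a bracket on sections of E by [s₁,s₂] = ∇_{ρ∘s₁}s₂ − ∇_{ρ∘s₂}s₁. Then (E, [·,·], ρ) is a Lie algebroid if and only if ∇ is torsion free with respect to ρ and its curvature R satisfies R(ρ(e₁),ρ(e₂))e₃ + R(ρ(e₂),ρ(e₃))e₁ + R(ρ(e₃),ρ(e₁))e₂ = 0 for all e₁,e₂,e₃ in a common fibre of E. -/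
/-! Abstract algebraic model of vector calculus on a manifold `M`:
`R` plays the role of the ring of smooth functions `C^∞(M)`,
`X` the `R`-module of vector fields on `M` (a Lie ring acting on `R` by
derivations), and `E` the `R`-module of sections of a vector bundle over `M`. -/

/-- The data of the Lie algebra of vector fields `X` acting by derivations on the
ring `R` of functions, with the usual compatibilities. -/
structure VectorFieldCalculus (R X : Type*) [CommRing R] [LieRing X] [Module R X] where
  act : X → R → R
  act_add_left : ∀ x y f, act (x + y) f = act x f + act y f
  act_smul_left : ∀ (f : R) (x : X) (g : R), act (f • x) g = f * act x g
  act_add_right : ∀ x f g, act x (f + g) = act x f + act x g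
  act_mul_right : ∀ x f g, act x (f * g) = f * act x g + g * act x f
  act_bracket : ∀ x y f, act ⁅x, y⁆ f = act x (act y f) - act y (act x f)
  bracket_smul : ∀ (x : X) (f : R) (y : X), ⁅x, f • y⁆ = f • ⁅x, y⁆ + (act x f) • y

/-- A (Koszul) connection on the module of sections `E`, relative to the
vector-field calculus `C`. -/
structure ConnectionOn (R X E : Type*) [CommRing R] [LieRing X] [Module R X]
    [AddCommGroup E] [Module R E] (C : VectorFieldCalculus R X) where
  cov : X → E → E
  cov_add_left : ∀ x y s, cov (x + y) s = cov x s + cov y s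
  cov_smul_left : ∀ (f : R) (x : X) (s : E), cov (f • x) s = f • cov x s
  cov_add_right : ∀ x s t, cov x (s + t) = cov x s + cov x t
  cov_leibniz : ∀ (x : X) (f : R) (s : E), cov x (f • s) = (C.act x f) • s + f • cov x s

/-!
Expanding `[s₁,[s₂,s₃]]` through the connection, the second-order terms of the cyclic sum
reassemble into the cyclic sum of `R(ρ sᵢ, ρ sⱼ) sₖ`, and what is left over is the cyclic sum of
`∇_{T(sᵢ,sⱼ)} sₖ`. So once the anchor intertwines the brackets (`T = 0`), the Jacobi identity is
exactly the first Bianchi identity. The Leibniz rule holds for every connection, by the Leibniz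
rule of `∇` and the `R`-linearity of `ρ` and of `∇` in its vector-field slot.
-/

namespace ConnectionOn

variable {R X E : Type*} [CommRing R] [LieRing X] [Module R X] [AddCommGroup E] [Module R E]
  {C : VectorFieldCalculus R X} (D : ConnectionOn R X E C)

theorem cov_sub_left (x y : X) (s : E) : D.cov (x - y) s = D.cov x s - D.cov y s :=
  (AddMonoidHom.mk' (fun x => D.cov x s) fun x y => D.cov_add_left x y s).map_sub x y

theorem cov_sub_right (x : X) (s t : E) : D.cov x (s - t) = D.cov x s - D.cov x t :=
  (AddMonoidHom.mk' (D.cov x) (D.cov_add_right x)).map_sub s t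

theorem cov_zero_left (s : E) : D.cov 0 s = 0 := by
  simpa using D.cov_sub_left 0 0 s

def curvature (x y : X) (s : E) : E :=
  D.cov x (D.cov y s) - D.cov y (D.cov x s) - D.cov ⁅x, y⁆ s

def bracket (ρ : E →ₗ[R] X) (s₁ s₂ : E) : E :=
  D.cov (ρ s₁) s₂ - D.cov (ρ s₂) s₁

def torsion (ρ : E →ₗ[R] X) (s₁ s₂ : E) : X :=
  ρ (D.bracket ρ s₁ s₂) - ⁅ρ s₁, ρ s₂⁆

variable (ρ : E →ₗ[R] X)

theorem bracket_smul_right (s₁ : E) (f : R) (s₂ : E) :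
    D.bracket ρ s₁ (f • s₂) = f • D.bracket ρ s₁ s₂ + C.act (ρ s₁) f • s₂ := by
  simp only [bracket, map_smul, D.cov_smul_left, D.cov_leibniz, smul_sub]
  abel

theorem jacobiator_bracket (s₁ s₂ s₃ : E) :
    D.bracket ρ s₁ (D.bracket ρ s₂ s₃) + D.bracket ρ s₂ (D.bracket ρ s₃ s₁) +
        D.bracket ρ s₃ (D.bracket ρ s₁ s₂) =
      D.curvature (ρ s₁) (ρ s₂) s₃ + D.curvature (ρ s₂) (ρ s₃) s₁ +
          D.curvature (ρ s₃) (ρ s₁) s₂ -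
        (D.cov (D.torsion ρ s₁ s₂) s₃ + D.cov (D.torsion ρ s₂ s₃) s₁ +
          D.cov (D.torsion ρ s₃ s₁) s₂) := by
  simp only [torsion, curvature, D.cov_sub_left]
  simp only [bracket, D.cov_sub_right]
  abel

theorem jacobiator_bracket_of_map_bracket
    (hρ : ∀ s₁ s₂ : E, ρ (D.bracket ρ s₁ s₂) = ⁅ρ s₁, ρ s₂⁆) (s₁ s₂ s₃ : E) :
    D.bracket ρ s₁ (D.bracket ρ s₂ s₃) + D.bracket ρ s₂ (D.bracket ρ s₃ s₁) +
        D.bracket ρ s₃ (D.bracket ρ s₁ s₂) =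
      D.curvature (ρ s₁) (ρ s₂) s₃ + D.curvature (ρ s₂) (ρ s₃) s₁ +
        D.curvature (ρ s₃) (ρ s₁) s₂ := by
  simp only [D.jacobiator_bracket, torsion, hρ, sub_self, D.cov_zero_left, add_zero, sub_zero]

end ConnectionOn

/-- With the bracket `[s₁,s₂] = ∇_{ρ∘s₁}s₂ − ∇_{ρ∘s₂}s₁` on sections
of `E`, the triple `(E, [·,·], ρ)` is a Lie algebroid (Jacobi identity, anchor
intertwines the brackets, Leibniz rule) if and only if `∇` is torsion free with
respect to `ρ` and its curvature `R` satisfies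
`R(ρ e₁, ρ e₂)e₃ + R(ρ e₂, ρ e₃)e₁ + R(ρ e₃, ρ e₁)e₂ = 0`. -/
theorem lie_algebroid_iff_torsionFree_and_firstBianchi
    {R X E : Type*} [CommRing R] [LieRing X] [Module R X]
    [AddCommGroup E] [Module R E]
    (C : VectorFieldCalculus R X) (D : ConnectionOn R X E C)
    (ρ : E →ₗ[R] X)
    (b : E → E → E)
    (hb : ∀ s₁ s₂ : E, b s₁ s₂ = D.cov (ρ s₁) s₂ - D.cov (ρ s₂) s₁)
    (Rc : X → X → E → E)
    (hRc : ∀ (x y : X) (s : E),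
      Rc x y s = D.cov x (D.cov y s) - D.cov y (D.cov x s) - D.cov ⁅x, y⁆ s) :
    ((∀ s₁ s₂ s₃ : E, b s₁ (b s₂ s₃) + b s₂ (b s₃ s₁) + b s₃ (b s₁ s₂) = 0) ∧
     (∀ s₁ s₂ : E, ρ (b s₁ s₂) = ⁅ρ s₁, ρ s₂⁆) ∧
     (∀ (s₁ : E) (f : R) (s₂ : E),
        b s₁ (f • s₂) = f • b s₁ s₂ + (C.act (ρ s₁) f) • s₂))
    ↔
    ((∀ s₁ s₂ : E, ρ (b s₁ s₂) = ⁅ρ s₁, ρ s₂⁆) ∧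
     (∀ e₁ e₂ e₃ : E,
        Rc (ρ e₁) (ρ e₂) e₃ + Rc (ρ e₂) (ρ e₃) e₁ + Rc (ρ e₃) (ρ e₁) e₂ = 0)) := by
  obtain rfl : b = D.bracket ρ := funext₂ hb
  obtain rfl : Rc = D.curvature := funext₃ hRc
  constructor
  · rintro ⟨hJ, hρ, -⟩
    refine ⟨hρ, fun e₁ e₂ e₃ => ?_⟩
    rw [← D.jacobiator_bracket_of_map_bracket ρ hρ]
    exact hJ e₁ e₂ e₃
  · rintro ⟨hρ, hB⟩
    refine ⟨fun s₁ s₂ s₃ => ?_, hρ, D.bracket_smul_right ρ⟩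
    rw [D.jacobiator_bracket_of_map_bracket ρ hρ]
    exact hB s₁ s₂ s₃
end

section
/- Let E be a vector bundle over M with a connection ∇ that is torsion free with respect to a vector bundle morphism ρ : E → TM. Then the curvature R of ∇ satisfies ρ( R(ρ(e₁),ρ(e₂))e₃ + R(ρ(e₂),ρ(e₃))e₁ + R(ρ(e₃),ρ(e₁))e₂ ) = 0 for all e₁, e₂, e₃ in a common fibre of E. -/
/-! Expanding `ρ R(ρe₁, ρe₂)e₃` with torsion-freeness turns every second covariant
derivative `ρ ∇_{ρe_i} ∇_{ρe_j} e_k` into `ρ ∇_{ρ ∇_{ρe_j} e_k} e_i` plus a bracket, and every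
`∇_{[ρe_i, ρe_j]}` into a difference of such terms. In the cyclic sum the iterated covariant
derivatives cancel, and the brackets that remain assemble, again by torsion-freeness, into the
Jacobi sum of `ρe₁, ρe₂, ρe₃`. -/

namespace ConnectionOn

variable {R X E : Type*} [CommRing R] [LieRing X] [Module R X] [AddCommGroup E] [Module R E]
  {C : VectorFieldCalculus R X} (D : ConnectionOn R X E C)

def IsTorsionFree (ρ : E →ₗ[R] X) : Prop :=
  ∀ s t : E, ρ (D.cov (ρ s) t - D.cov (ρ t) s) = ⁅ρ s, ρ t⁆

namespace IsTorsionFree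

variable {D} {ρ : E →ₗ[R] X}

theorem lie_eq (h : D.IsTorsionFree ρ) (s t : E) :
    ⁅ρ s, ρ t⁆ = ρ (D.cov (ρ s) t) - ρ (D.cov (ρ t) s) := by
  rw [← h s t, map_sub]

theorem map_cov_eq (h : D.IsTorsionFree ρ) (s t : E) :
    ρ (D.cov (ρ s) t) = ρ (D.cov (ρ t) s) + ⁅ρ s, ρ t⁆ := by
  rw [h.lie_eq, add_sub_cancel]

theorem cov_lie (h : D.IsTorsionFree ρ) (s t u : E) :
    D.cov ⁅ρ s, ρ t⁆ u = D.cov (ρ (D.cov (ρ s) t)) u - D.cov (ρ (D.cov (ρ t) s)) u := by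
  rw [h.lie_eq, cov_sub_left]

theorem map_curvature (h : D.IsTorsionFree ρ) (e₁ e₂ e₃ : E) :
    ρ (D.curvature (ρ e₁) (ρ e₂) e₃) =
      ⁅ρ e₁, ρ (D.cov (ρ e₂) e₃)⁆ - ⁅ρ e₂, ρ (D.cov (ρ e₁) e₃)⁆
        + ρ (D.cov (ρ (D.cov (ρ e₂) e₃)) e₁) - ρ (D.cov (ρ (D.cov (ρ e₁) e₃)) e₂)
        - ρ (D.cov (ρ (D.cov (ρ e₁) e₂)) e₃) + ρ (D.cov (ρ (D.cov (ρ e₂) e₁)) e₃) := by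
  rw [curvature, map_sub, map_sub, h.cov_lie, map_sub, h.map_cov_eq e₁ (D.cov (ρ e₂) e₃),
    h.map_cov_eq e₂ (D.cov (ρ e₁) e₃)]
  abel

theorem jacobi (h : D.IsTorsionFree ρ) (e₁ e₂ e₃ : E) :
    ⁅ρ e₁, ρ (D.cov (ρ e₂) e₃) - ρ (D.cov (ρ e₃) e₂)⁆
      + ⁅ρ e₂, ρ (D.cov (ρ e₃) e₁) - ρ (D.cov (ρ e₁) e₃)⁆
      + ⁅ρ e₃, ρ (D.cov (ρ e₁) e₂) - ρ (D.cov (ρ e₂) e₁)⁆ = 0 := by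
  rw [← h.lie_eq, ← h.lie_eq, ← h.lie_eq]
  exact lie_jacobi _ _ _

theorem map_curvature_cyclic_sum (h : D.IsTorsionFree ρ) (e₁ e₂ e₃ : E) :
    ρ (D.curvature (ρ e₁) (ρ e₂) e₃ + D.curvature (ρ e₂) (ρ e₃) e₁
      + D.curvature (ρ e₃) (ρ e₁) e₂) = 0 := by
  refine Eq.trans ?_ (h.jacobi e₁ e₂ e₃)
  simp only [map_add, h.map_curvature, lie_sub]
  abel

end IsTorsionFree

end ConnectionOn

/-- (Generalized first Bianchi identity.) If the connection `∇` on
`E` is torsion free with respect to `ρ : E → TM`, then its curvature `R` satisfies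
`ρ(R(ρ e₁, ρ e₂)e₃ + R(ρ e₂, ρ e₃)e₁ + R(ρ e₃, ρ e₁)e₂) = 0`. -/
theorem rho_firstBianchi_of_torsionFree
    {R X E : Type*} [CommRing R] [LieRing X] [Module R X]
    [AddCommGroup E] [Module R E]
    (C : VectorFieldCalculus R X) (D : ConnectionOn R X E C)
    (ρ : E →ₗ[R] X)
    (htf : ∀ s₁ s₂ : E,
      ρ (D.cov (ρ s₁) s₂ - D.cov (ρ s₂) s₁) = ⁅ρ s₁, ρ s₂⁆)
    (Rc : X → X → E → E)
    (hRc : ∀ (x y : X) (s : E),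
      Rc x y s = D.cov x (D.cov y s) - D.cov y (D.cov x s) - D.cov ⁅x, y⁆ s) :
    ∀ e₁ e₂ e₃ : E,
      ρ (Rc (ρ e₁) (ρ e₂) e₃ + Rc (ρ e₂) (ρ e₃) e₁ + Rc (ρ e₃) (ρ e₁) e₂) = 0 := by
  obtain rfl : Rc = D.curvature := funext fun x => funext fun y => funext (hRc x y)
  exact ConnectionOn.IsTorsionFree.map_curvature_cyclic_sum htf
end

section
/- Let H and F be complex vector spaces with dim F > 2, and let R : Λ²W → End(H ⊗ F) be a linear map (W a vector space) and ρ : H ⊗ F → W a linear map, such that for all e ∈ H and f₁,f₂,f₃ ∈ F the cyclic sum R(ρ(e⊗f₁),ρ(e⊗f₂))(e⊗f₃) + R(ρ(e⊗f₂),ρ(e⊗f₃))(e⊗f₁) + R(ρ(e⊗f₃),ρ(e⊗f₁))(e⊗f₂) lies in e ⊗ F := {e ⊗ f : f ∈ F}, and such that R(X,Y) = R^H(X,Y) ⊗ id_F + id_H ⊗ R^F(X,Y) for some R^H : Λ²W → End(H), R^F : Λ²W → End(F). Then each term R(ρ(e⊗f₁),ρ(e⊗f₂))(e⊗f₃) lies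 in e ⊗ F; equivalently R^H(ρ(e⊗f₁),ρ(e⊗f₂))e is proportional to e for all e ∈ H and f₁,f₂ ∈ F. -/
/-!
Fix `e` and pass to the quotient `H ⧸ ℂ ∙ e`. There the `id_H ⊗ R^F` part of each term of the
cyclic sum disappears, so the hypothesis says that `a(f₁,f₂) := [R^H(ρ(e⊗f₁),ρ(e⊗f₂))e]` satisfies
`a(f₁,f₂) ⊗ f₃ + a(f₂,f₃) ⊗ f₁ + a(f₃,f₁) ⊗ f₂ = 0`. Since `dim F > 2` there is a linear form
vanishing on `f₁, f₂` but not on some `f₃`; contracting with it leaves a nonzero multiple of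
`a(f₁,f₂)`, hence `a = 0`.
-/

open TensorProduct Module

section

variable {K M V : Type*} [Field K] [AddCommGroup M] [Module K M] [AddCommGroup V] [Module K V]

theorem Module.exists_dual_apply_eq_zero_apply_ne_zero (hV : 2 < finrank K V) (v₁ v₂ : V) :
    ∃ (φ : Dual K V) (v : V), φ v₁ = 0 ∧ φ v₂ = 0 ∧ φ v ≠ 0 := by
  classical
  have hcard : (({v₁, v₂} : Finset V) : Set V).toFinset.card < finrank K V := by
    simpa using Finset.card_le_two.trans_lt hV
  obtain ⟨φ, hφ, hker⟩ :=
    (Submodule.span K ({v₁, v₂} : Set V)).exists_le_ker_of_lt_top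
      (by simpa using span_lt_top_of_card_lt_finrank hcard)
  obtain ⟨v, hv⟩ := DFunLike.ne_iff.1 hφ
  exact ⟨φ, v, hker (Submodule.subset_span (by simp)), hker (Submodule.subset_span (by simp)), hv⟩

theorem eq_zero_of_cyclic_tmul_eq_zero (hV : 2 < finrank K V) (a : V → V → M)
    (h : ∀ v₁ v₂ v₃, a v₁ v₂ ⊗ₜ[K] v₃ + a v₂ v₃ ⊗ₜ[K] v₁ + a v₃ v₁ ⊗ₜ[K] v₂ = 0) (v₁ v₂ : V) :
    a v₁ v₂ = 0 := by
  obtain ⟨φ, v, hφ₁, hφ₂, hφ⟩ := exists_dual_apply_eq_zero_apply_ne_zero hV v₁ v₂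
  have hcontract := congrArg (TensorProduct.rid K M ∘ LinearMap.lTensor M φ) (h v₁ v₂ v)
  simp only [Function.comp_apply, map_add, LinearMap.lTensor_tmul, TensorProduct.rid_tmul,
    hφ₁, hφ₂, zero_smul, add_zero, map_zero] at hcontract
  exact (smul_eq_zero.1 hcontract).resolve_left hφ

theorem rTensor_mkQ_eq_zero_of_mem_range_mk {p : Submodule K M} {m : M} (hm : m ∈ p)
    {x : M ⊗[K] V} (hx : x ∈ LinearMap.range (TensorProduct.mk K M V m)) :
    p.mkQ.rTensor V x = 0 := by
  obtain ⟨v, rfl⟩ := hx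
  simp [(Submodule.Quotient.mk_eq_zero p).2 hm]

theorem rTensor_mkQ_map_add_map_tmul {p : Submodule K M} {m : M} (hm : m ∈ p)
    (A : End K M) (B : End K V) (v : V) :
    p.mkQ.rTensor V ((TensorProduct.map A LinearMap.id + TensorProduct.map LinearMap.id B :
      End K (M ⊗[K] V)) (m ⊗ₜ v)) = p.mkQ (A m) ⊗ₜ v := by
  simp [(Submodule.Quotient.mk_eq_zero p).2 hm]

end

theorem cyclic_in_eF_implies_each_term_in_eF_general
    {H F W : Type*} [AddCommGroup H] [Module ℂ H] [AddCommGroup F] [Module ℂ F]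
    [AddCommGroup W] [Module ℂ W]
    (hF : 2 < finrank ℂ F)
    (R : W →ₗ[ℂ] W →ₗ[ℂ] Module.End ℂ (H ⊗[ℂ] F))
    (RH : W →ₗ[ℂ] W →ₗ[ℂ] Module.End ℂ H)
    (RF : W →ₗ[ℂ] W →ₗ[ℂ] Module.End ℂ F)
    (hdec : ∀ x y : W, R x y =
      TensorProduct.map (RH x y) LinearMap.id + TensorProduct.map LinearMap.id (RF x y))
    (ρ : H ⊗[ℂ] F →ₗ[ℂ] W)
    (hcyc : ∀ (e : H) (f₁ f₂ f₃ : F),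
        R (ρ (e ⊗ₜ f₁)) (ρ (e ⊗ₜ f₂)) (e ⊗ₜ f₃)
      + R (ρ (e ⊗ₜ f₂)) (ρ (e ⊗ₜ f₃)) (e ⊗ₜ f₁)
      + R (ρ (e ⊗ₜ f₃)) (ρ (e ⊗ₜ f₁)) (e ⊗ₜ f₂)
          ∈ LinearMap.range (TensorProduct.mk ℂ H F e)) :
    (∀ (e : H) (f₁ f₂ f₃ : F),
        R (ρ (e ⊗ₜ f₁)) (ρ (e ⊗ₜ f₂)) (e ⊗ₜ f₃)
          ∈ LinearMap.range (TensorProduct.mk ℂ H F e)) ∧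
    (∀ (e : H) (f₁ f₂ : F), ∃ c : ℂ,
        RH (ρ (e ⊗ₜ f₁)) (ρ (e ⊗ₜ f₂)) e = c • e) := by
  have hRH : ∀ (e : H) (f₁ f₂ : F), RH (ρ (e ⊗ₜ f₁)) (ρ (e ⊗ₜ f₂)) e ∈ ℂ ∙ e := by
    intro e
    have he : e ∈ ℂ ∙ e := Submodule.mem_span_singleton_self e
    have hquot : ∀ x y g, (ℂ ∙ e).mkQ.rTensor F (R x y (e ⊗ₜ g)) = (ℂ ∙ e).mkQ (RH x y e) ⊗ₜ g :=
      fun x y g => by rw [hdec]; exact rTensor_mkQ_map_add_map_tmul he _ _ g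
    refine fun f₁ f₂ => (Submodule.Quotient.mk_eq_zero _).1
      (eq_zero_of_cyclic_tmul_eq_zero hF
        (fun g₁ g₂ ↦ (ℂ ∙ e).mkQ (RH (ρ (e ⊗ₜ g₁)) (ρ (e ⊗ₜ g₂)) e)) (fun g₁ g₂ g₃ => ?_) f₁ f₂)
    simpa only [map_add, hquot] using rTensor_mkQ_eq_zero_of_mem_range_mk he (hcyc e g₁ g₂ g₃)
  have hprop : ∀ (e : H) (f₁ f₂ : F), ∃ c : ℂ, RH (ρ (e ⊗ₜ f₁)) (ρ (e ⊗ₜ f₂)) e = c • e :=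
    fun e f₁ f₂ => (Submodule.mem_span_singleton.1 (hRH e f₁ f₂)).imp fun _ h => h.symm
  refine ⟨fun e f₁ f₂ f₃ => ?_, hprop⟩
  obtain ⟨c, hc⟩ := hprop e f₁ f₂
  exact ⟨c • f₃ + RF (ρ (e ⊗ₜ f₁)) (ρ (e ⊗ₜ f₂)) f₃, by simp [hdec, hc, tmul_add, smul_tmul]⟩

/-- Let `H`, `F` be complex vector spaces with `dim F > 2`, `W` a
complex vector space, `R : Λ²W → End(H ⊗ F)` and `ρ : H ⊗ F → W` linear, such that
for all `e ∈ H`, `f₁,f₂,f₃ ∈ F` the cyclic sum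
`R(ρ(e⊗f₁),ρ(e⊗f₂))(e⊗f₃) + R(ρ(e⊗f₂),ρ(e⊗f₃))(e⊗f₁) + R(ρ(e⊗f₃),ρ(e⊗f₁))(e⊗f₂)`
lies in `e ⊗ F`, and `R(X,Y) = R^H(X,Y) ⊗ id_F + id_H ⊗ R^F(X,Y)`. Then each term
`R(ρ(e⊗f₁),ρ(e⊗f₂))(e⊗f₃)` lies in `e ⊗ F`; equivalently
`R^H(ρ(e⊗f₁),ρ(e⊗f₂))e` is proportional to `e`. -/
theorem cyclic_in_eF_implies_each_term_in_eF
    {H F W : Type*} [AddCommGroup H] [Module ℂ H] [AddCommGroup F] [Module ℂ F]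
    [AddCommGroup W] [Module ℂ W]
    [FiniteDimensional ℂ H] [FiniteDimensional ℂ F] [FiniteDimensional ℂ W]
    (hH : 1 ≤ finrank ℂ H) (hF : 2 < finrank ℂ F)
    (R : W →ₗ[ℂ] W →ₗ[ℂ] Module.End ℂ (H ⊗[ℂ] F))
    (hRalt : ∀ w : W, R w w = 0)
    (RH : W →ₗ[ℂ] W →ₗ[ℂ] Module.End ℂ H)
    (RF : W →ₗ[ℂ] W →ₗ[ℂ] Module.End ℂ F)
    (hdec : ∀ x y : W, R x y =
      TensorProduct.map (RH x y) LinearMap.id + TensorProduct.map LinearMap.id (RF x y))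
    (ρ : H ⊗[ℂ] F →ₗ[ℂ] W)
    (hcyc : ∀ (e : H) (f₁ f₂ f₃ : F),
        R (ρ (e ⊗ₜ f₁)) (ρ (e ⊗ₜ f₂)) (e ⊗ₜ f₃)
      + R (ρ (e ⊗ₜ f₂)) (ρ (e ⊗ₜ f₃)) (e ⊗ₜ f₁)
      + R (ρ (e ⊗ₜ f₃)) (ρ (e ⊗ₜ f₁)) (e ⊗ₜ f₂)
          ∈ LinearMap.range (TensorProduct.mk ℂ H F e)) :
    (∀ (e : H) (f₁ f₂ f₃ : F),
        R (ρ (e ⊗ₜ f₁)) (ρ (e ⊗ₜ f₂)) (e ⊗ₜ f₃)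
          ∈ LinearMap.range (TensorProduct.mk ℂ H F e)) ∧
    (∀ (e : H) (f₁ f₂ : F), ∃ c : ℂ,
        RH (ρ (e ⊗ₜ f₁)) (ρ (e ⊗ₜ f₂)) e = c • e) :=
  cyclic_in_eF_implies_each_term_in_eF_general hF R RH RF hdec ρ hcyc
end

section
/- Let V, Q, W be vector spaces with dim Q = 3 and dim W > 0 and dim V ≥ 2, and suppose curvature operators R^V, R^Q, R^W on the vector space T = (V ⊗ Q) ⊕ W satisfy the algebraic first Bianchi identity for the operator R = (R^V ⊗ id + id ⊗ R^Q) ⊕ R^W acting on T, where moreover R^Q(X,Y)J ⟂ J for all X,Y ∈ T and J ∈ Q (with respect to a given inner product on Q). Then R^Q(X,Y) = 0 for all X, Y ∈ W. -/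
open TensorProduct Module RealInnerProductSpace

/- Contracting `v ⊗ J + u ⊗ b = 0` against `⟪b, ·⟫` leaves `‖b‖² • u = 0`. -/
theorem TensorProduct.eq_zero_of_tmul_add_tmul_eq_zero {𝕜 V Q : Type*} [RCLike 𝕜]
    [AddCommGroup V] [Module 𝕜 V] [NormedAddCommGroup Q] [InnerProductSpace 𝕜 Q]
    {u v : V} {J b : Q} (hu : u ≠ 0) (hbJ : inner 𝕜 b J = 0)
    (h : v ⊗ₜ[𝕜] J + u ⊗ₜ[𝕜] b = 0) : b = 0 := by
  let contract : V ⊗[𝕜] Q →ₗ[𝕜] V :=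
    (TensorProduct.rid 𝕜 V).toLinearMap ∘ₗ LinearMap.lTensor V (innerₛₗ 𝕜 b)
  have hcontract : inner 𝕜 b b • u = 0 := by
    simpa [contract, hbJ] using congrArg contract h
  exact inner_self_eq_zero.mp ((smul_eq_zero.mp hcontract).resolve_right hu)

theorem RQ_vanishes_on_W_general
    {V W : Type*} [AddCommGroup V] [Module ℝ V] [AddCommGroup W] [Module ℝ W]
    {Q : Type*} [NormedAddCommGroup Q] [InnerProductSpace ℝ Q]
    (hV : 2 ≤ finrank ℝ V)
    (RV : ((V ⊗[ℝ] Q) × W) →ₗ[ℝ] ((V ⊗[ℝ] Q) × W) →ₗ[ℝ] Module.End ℝ V)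
    (RQ : ((V ⊗[ℝ] Q) × W) →ₗ[ℝ] ((V ⊗[ℝ] Q) × W) →ₗ[ℝ] Module.End ℝ Q)
    (RW : ((V ⊗[ℝ] Q) × W) →ₗ[ℝ] ((V ⊗[ℝ] Q) × W) →ₗ[ℝ] Module.End ℝ W)
    -- the combined curvature operator
    (Rfull : ((V ⊗[ℝ] Q) × W) → ((V ⊗[ℝ] Q) × W) →
      ((V ⊗[ℝ] Q) × W) →ₗ[ℝ] ((V ⊗[ℝ] Q) × W))
    (hRfull : ∀ x y, Rfull x y =
      LinearMap.prodMap
        (TensorProduct.map (RV x y) LinearMap.id + TensorProduct.map LinearMap.id (RQ x y))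
        (RW x y))
    -- the algebraic first Bianchi identity
    (hBianchi : ∀ x y z : (V ⊗[ℝ] Q) × W,
      Rfull x y z + Rfull y z x + Rfull z x y = 0)
    -- `R^Q(X,Y)J` is orthogonal to `J`
    (hperp : ∀ (x y : (V ⊗[ℝ] Q) × W) (J : Q), ⟪RQ x y J, J⟫ = 0) :
    ∀ w₁ w₂ : W, RQ ((0 : V ⊗[ℝ] Q), w₁) ((0 : V ⊗[ℝ] Q), w₂) = 0 := by
  intro w₁ w₂
  have : Nontrivial V := Module.nontrivial_of_finrank_pos (R := ℝ) (by omega)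
  obtain ⟨u, hu⟩ := exists_ne (0 : V)
  ext J
  set X : (V ⊗[ℝ] Q) × W := (0, w₁)
  set Y : (V ⊗[ℝ] Q) × W := (0, w₂)
  -- the two cyclic terms of Bianchi for `X, Y, u ⊗ J` have no `V ⊗ Q`-component
  have hsplit : RV X Y u ⊗ₜ[ℝ] J + u ⊗ₜ[ℝ] RQ X Y J = 0 := by
    simpa [hRfull, X, Y] using congrArg Prod.fst (hBianchi X Y (u ⊗ₜ[ℝ] J, 0))
  exact TensorProduct.eq_zero_of_tmul_add_tmul_eq_zero hu (hperp X Y J) hsplit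

/-- Let `V, Q, W` be real vector spaces with `dim Q = 3`,
`dim W > 0`, `dim V ≥ 2`, `Q` carrying an inner product. Suppose curvature
operators `R^V, R^Q, R^W` on `T = (V ⊗ Q) ⊕ W` are such that
`R = (R^V ⊗ id + id ⊗ R^Q) ⊕ R^W` satisfies the algebraic first Bianchi identity
on `T`, and `R^Q(X,Y)J ⟂ J` for all `X, Y ∈ T`, `J ∈ Q`. Then `R^Q(X,Y) = 0` for
all `X, Y ∈ W`. -/
theorem RQ_vanishes_on_W
    {V W : Type*} [AddCommGroup V] [Module ℝ V] [AddCommGroup W] [Module ℝ W]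
    {Q : Type*} [NormedAddCommGroup Q] [InnerProductSpace ℝ Q]
    [FiniteDimensional ℝ V] [FiniteDimensional ℝ Q] [FiniteDimensional ℝ W]
    (hQ : finrank ℝ Q = 3) (hW : 0 < finrank ℝ W) (hV : 2 ≤ finrank ℝ V)
    (RV : ((V ⊗[ℝ] Q) × W) →ₗ[ℝ] ((V ⊗[ℝ] Q) × W) →ₗ[ℝ] Module.End ℝ V)
    (RQ : ((V ⊗[ℝ] Q) × W) →ₗ[ℝ] ((V ⊗[ℝ] Q) × W) →ₗ[ℝ] Module.End ℝ Q)
    (RW : ((V ⊗[ℝ] Q) × W) →ₗ[ℝ] ((V ⊗[ℝ] Q) × W) →ₗ[ℝ] Module.End ℝ W)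
    (hAltV : ∀ t, RV t t = 0) (hAltQ : ∀ t, RQ t t = 0) (hAltW : ∀ t, RW t t = 0)
    -- the combined curvature operator
    (Rfull : ((V ⊗[ℝ] Q) × W) → ((V ⊗[ℝ] Q) × W) →
      ((V ⊗[ℝ] Q) × W) →ₗ[ℝ] ((V ⊗[ℝ] Q) × W))
    (hRfull : ∀ x y, Rfull x y =
      LinearMap.prodMap
        (TensorProduct.map (RV x y) LinearMap.id + TensorProduct.map LinearMap.id (RQ x y))
        (RW x y))
    -- the algebraic first Bianchi identity
    (hBianchi : ∀ x y z : (V ⊗[ℝ] Q) × W,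
      Rfull x y z + Rfull y z x + Rfull z x y = 0)
    -- `R^Q(X,Y)J` is orthogonal to `J`
    (hperp : ∀ (x y : (V ⊗[ℝ] Q) × W) (J : Q), ⟪RQ x y J, J⟫ = 0) :
    ∀ w₁ w₂ : W, RQ ((0 : V ⊗[ℝ] Q), w₁) ((0 : V ⊗[ℝ] Q), w₂) = 0 :=
  RQ_vanishes_on_W_general hV RV RQ RW Rfull hRfull hBianchi hperp
end

section
/- Let V, Q be finite-dimensional real vector spaces with dim V ≥ 3 and Q an oriented 3-dimensional inner product space, and let R^V : Λ²(V⊗Q) → End(V) and R^Q : Λ²(V⊗Q) → so(Q) be bilinear antisymmetric maps such that R := R^V ⊗ id_Q + id_V ⊗ R^Q satisfies the algebraic first Bianchi identity on V ⊗ Q. Then for any orthonormal frame (J, J', J'') of Q and any S, U ∈ V: R^Q(S⊗J, U⊗J)J = 0, R^Q(S⊗J, U⊗J)J' = 0, and R^Q(S⊗J, U⊗J')J'' = 0. -/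
open TensorProduct Module RealInnerProductSpace

/-!
Pair the `Q`-factor of the Bianchi identity for `x = S ⊗ A`, `y = U ⊗ B`, `z = W ⊗ C` with a
vector `D` orthogonal to `A, B, C`: the `R^V` terms die and what is left is the relation
`⟪D, R^Q(x,y)C⟫ • W + ⟪D, R^Q(y,z)A⟫ • S + ⟪D, R^Q(z,x)B⟫ • U = 0` in `V`. As `dim V ≥ 3`, `W` can
be taken outside `span {S, U}`, so `⟪D, R^Q(S ⊗ A, U ⊗ B)C⟫ = 0` whenever `D ⊥ A, B, C`. With the
skew-symmetry of `R^Q` this kills every component, in the frame `(J, J', J'')`, of the three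
vectors in question.
-/

section SpanPair

variable {V : Type*} [AddCommGroup V] [Module ℝ V]

theorem exists_notMem_span_pair (hV : 3 ≤ finrank ℝ V) (S U : V) :
    ∃ W, W ∉ Submodule.span ℝ ({S, U} : Set V) := by
  classical
  by_contra! hspan
  have hle : finrank ℝ V ≤ 2 := calc
    finrank ℝ V = finrank ℝ (Submodule.span ℝ (({S, U} : Finset V) : Set V)) := by
      rw [Finset.coe_pair, Submodule.eq_top_iff'.2 hspan, finrank_top]
    _ ≤ ({S, U} : Finset V).card := finrank_span_finset_le_card _
    _ ≤ 2 := Finset.card_le_two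
  omega

theorem coeff_eq_zero_of_notMem_span_pair {S U W : V}
    (hW : W ∉ Submodule.span ℝ ({S, U} : Set V)) {a b c : ℝ}
    (h : a • W + b • S + c • U = 0) : a = 0 := by
  by_contra ha
  refine hW ((Submodule.smul_mem_iff _ ha).1 (Submodule.mem_span_pair.2 ⟨-b, -c, ?_⟩))
  linear_combination (norm := module) -h

end SpanPair

section InnerProduct

variable {E : Type*} [NormedAddCommGroup E] [InnerProductSpace ℝ E]

theorem real_inner_apply_eq_neg_of_forall_inner_apply_self {T : E →ₗ[ℝ] E}
    (hT : ∀ x, ⟪T x, x⟫ = 0) (x y : E) : ⟪x, T y⟫ = -⟪y, T x⟫ := by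
  have h := hT (x + y)
  rw [map_add, inner_add_left, inner_add_right, inner_add_right, hT x, hT y] at h
  rw [real_inner_comm (T y), real_inner_comm (T x)]
  linarith

theorem Orthonormal.eq_zero_of_forall_inner_eq_zero {ι : Type*} [Fintype ι] [Nonempty ι]
    {v : ι → E} (hv : Orthonormal ℝ v) (hcard : Fintype.card ι = finrank ℝ E) {x : E}
    (hx : ∀ i, ⟪v i, x⟫ = 0) : x = 0 :=
  InnerProductSpace.ext_inner_left_basis (basisOfOrthonormalOfCardEqFinrank hv hcard) fun i => by
    simp [hx]

end InnerProduct

section Bianchi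

variable {V Q : Type*} [AddCommGroup V] [Module ℝ V]
  [NormedAddCommGroup Q] [InnerProductSpace ℝ Q]
  {RV : V ⊗[ℝ] Q → V ⊗[ℝ] Q → Module.End ℝ V} {RQ : V ⊗[ℝ] Q → V ⊗[ℝ] Q → Module.End ℝ Q}
  {R : V ⊗[ℝ] Q → V ⊗[ℝ] Q → (V ⊗[ℝ] Q →ₗ[ℝ] V ⊗[ℝ] Q)}

theorem bianchi_inner_tmul
    (hR : ∀ x y, R x y = map (RV x y) LinearMap.id + map LinearMap.id (RQ x y))
    (hBianchi : ∀ x y z, R x y z + R y z x + R z x y = 0)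
    {A B C D : Q} (hA : ⟪D, A⟫ = 0) (hB : ⟪D, B⟫ = 0) (hC : ⟪D, C⟫ = 0) (S U W : V) :
    ⟪D, RQ (S ⊗ₜ A) (U ⊗ₜ B) C⟫ • W + ⟪D, RQ (U ⊗ₜ B) (W ⊗ₜ C) A⟫ • S
      + ⟪D, RQ (W ⊗ₜ C) (S ⊗ₜ A) B⟫ • U = 0 := by
  have h := congrArg (TensorProduct.rid ℝ V ∘ LinearMap.lTensor V (innerₛₗ ℝ D))
    (hBianchi (S ⊗ₜ A) (U ⊗ₜ B) (W ⊗ₜ C))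
  simpa [hR, tmul_add, hA, hB, hC] using h

theorem inner_curvature_tmul_eq_zero (hV : 3 ≤ finrank ℝ V)
    (hR : ∀ x y, R x y = map (RV x y) LinearMap.id + map LinearMap.id (RQ x y))
    (hBianchi : ∀ x y z, R x y z + R y z x + R z x y = 0)
    {A B C D : Q} (hA : ⟪D, A⟫ = 0) (hB : ⟪D, B⟫ = 0) (hC : ⟪D, C⟫ = 0) (S U : V) :
    ⟪D, RQ (S ⊗ₜ A) (U ⊗ₜ B) C⟫ = 0 :=
  have ⟨_, hW⟩ := exists_notMem_span_pair hV S U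
  coeff_eq_zero_of_notMem_span_pair hW (bianchi_inner_tmul hR hBianchi hA hB hC S U _)

end Bianchi

theorem RQ_vanishing_from_firstBianchi_general
    {V : Type*} [AddCommGroup V] [Module ℝ V]
    {Q : Type*} [NormedAddCommGroup Q] [InnerProductSpace ℝ Q]
    (hV : 3 ≤ finrank ℝ V) (hQ : finrank ℝ Q = 3)
    (RV : (V ⊗[ℝ] Q) →ₗ[ℝ] (V ⊗[ℝ] Q) →ₗ[ℝ] Module.End ℝ V)
    (RQ : (V ⊗[ℝ] Q) →ₗ[ℝ] (V ⊗[ℝ] Q) →ₗ[ℝ] Module.End ℝ Q)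
    -- `R^Q` takes values in the skew-symmetric endomorphisms of `Q`
    (hskew : ∀ (x y : V ⊗[ℝ] Q) (A : Q), ⟪RQ x y A, A⟫ = 0)
    -- the algebraic first Bianchi identity for `R = R^V ⊗ id_Q + id_V ⊗ R^Q`
    (Rfull : (V ⊗[ℝ] Q) → (V ⊗[ℝ] Q) → ((V ⊗[ℝ] Q) →ₗ[ℝ] (V ⊗[ℝ] Q)))
    (hRfull : ∀ x y, Rfull x y =
      TensorProduct.map (RV x y) LinearMap.id + TensorProduct.map LinearMap.id (RQ x y))
    (hBianchi : ∀ x y z : V ⊗[ℝ] Q,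
      Rfull x y z + Rfull y z x + Rfull z x y = 0) :
    ∀ (J J' J'' : Q) (S U : V),
      ⟪J, J⟫ = 1 → ⟪J', J'⟫ = 1 → ⟪J'', J''⟫ = 1 →
      ⟪J, J'⟫ = 0 → ⟪J, J''⟫ = 0 → ⟪J', J''⟫ = 0 →
        RQ (S ⊗ₜ J) (U ⊗ₜ J) J = 0 ∧
        RQ (S ⊗ₜ J) (U ⊗ₜ J) J' = 0 ∧
        RQ (S ⊗ₜ J) (U ⊗ₜ J') J'' = 0 := by
  intro J J' J'' S U hJJ hJ'J' hJ''J'' hJJ' hJJ'' hJ'J''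
  have hJ'J : ⟪J', J⟫ = 0 := real_inner_comm J J' ▸ hJJ'
  have hJ''J : ⟪J'', J⟫ = 0 := real_inner_comm J J'' ▸ hJJ''
  have hJ''J' : ⟪J'', J'⟫ = 0 := real_inner_comm J' J'' ▸ hJ'J''
  have hframe : Orthonormal ℝ ![J, J', J''] := by
    rw [orthonormal_iff_ite]
    intro i j
    fin_cases i <;> fin_cases j <;> simp [*, -inner_self_eq_norm_sq_to_K]
  have hzero (x : Q) (h : ⟪J, x⟫ = 0) (h' : ⟪J', x⟫ = 0) (h'' : ⟪J'', x⟫ = 0) : x = 0 :=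
    hframe.eq_zero_of_forall_inner_eq_zero (by simp [hQ]) fun i => by fin_cases i <;> assumption
  have hdiag (x y : V ⊗[ℝ] Q) (A : Q) : ⟪A, RQ x y A⟫ = 0 := by
    rw [real_inner_comm]; exact hskew x y A
  have hanti (x y : V ⊗[ℝ] Q) :=
    real_inner_apply_eq_neg_of_forall_inner_apply_self (T := RQ x y) (hskew x y)
  have hflat {A B C D : Q} (hA : ⟪D, A⟫ = 0) (hB : ⟪D, B⟫ = 0) (hC : ⟪D, C⟫ = 0) :=
    inner_curvature_tmul_eq_zero hV hRfull hBianchi hA hB hC S U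
  refine ⟨hzero _ (hdiag ..) (hflat hJ'J hJ'J hJ'J) (hflat hJ''J hJ''J hJ''J),
    hzero _ ?_ (hdiag ..) (hflat hJ''J hJ''J hJ''J'),
    hzero _ ?_ ?_ (hdiag ..)⟩
  · rw [hanti, hflat hJ'J hJ'J hJ'J, neg_zero]
  · rw [hanti, hflat hJ''J hJ''J' hJ''J, neg_zero]
  · rw [hanti, hflat hJ''J hJ''J' hJ''J', neg_zero]

/-- Let `V`, `Q` be finite-dimensional real vector spaces with
`dim V ≥ 3` and `Q` a 3-dimensional inner product space, and let
`R^V : Λ²(V⊗Q) → End(V)` and `R^Q : Λ²(V⊗Q) → so(Q)` be such that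
`R = R^V ⊗ id_Q + id_V ⊗ R^Q` satisfies the algebraic first Bianchi identity on
`V ⊗ Q`. Then for any orthonormal frame `(J, J', J'')` of `Q` and any `S, U ∈ V`:
`R^Q(S⊗J, U⊗J)J = 0`, `R^Q(S⊗J, U⊗J)J' = 0`, and `R^Q(S⊗J, U⊗J')J'' = 0`. -/
theorem RQ_vanishing_from_firstBianchi
    {V : Type*} [AddCommGroup V] [Module ℝ V]
    {Q : Type*} [NormedAddCommGroup Q] [InnerProductSpace ℝ Q]
    [FiniteDimensional ℝ V] [FiniteDimensional ℝ Q]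
    (hV : 3 ≤ finrank ℝ V) (hQ : finrank ℝ Q = 3)
    (RV : (V ⊗[ℝ] Q) →ₗ[ℝ] (V ⊗[ℝ] Q) →ₗ[ℝ] Module.End ℝ V)
    (RQ : (V ⊗[ℝ] Q) →ₗ[ℝ] (V ⊗[ℝ] Q) →ₗ[ℝ] Module.End ℝ Q)
    (hAltV : ∀ t, RV t t = 0) (hAltQ : ∀ t, RQ t t = 0)
    -- `R^Q` takes values in the skew-symmetric endomorphisms of `Q`
    (hskew : ∀ (x y : V ⊗[ℝ] Q) (A : Q), ⟪RQ x y A, A⟫ = 0)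
    -- the algebraic first Bianchi identity for `R = R^V ⊗ id_Q + id_V ⊗ R^Q`
    (Rfull : (V ⊗[ℝ] Q) → (V ⊗[ℝ] Q) → ((V ⊗[ℝ] Q) →ₗ[ℝ] (V ⊗[ℝ] Q)))
    (hRfull : ∀ x y, Rfull x y =
      TensorProduct.map (RV x y) LinearMap.id + TensorProduct.map LinearMap.id (RQ x y))
    (hBianchi : ∀ x y z : V ⊗[ℝ] Q,
      Rfull x y z + Rfull y z x + Rfull z x y = 0) :
    ∀ (J J' J'' : Q) (S U : V),
      ⟪J, J⟫ = 1 → ⟪J', J'⟫ = 1 → ⟪J'', J''⟫ = 1 →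
      ⟪J, J'⟫ = 0 → ⟪J, J''⟫ = 0 → ⟪J', J''⟫ = 0 →
        RQ (S ⊗ₜ J) (U ⊗ₜ J) J = 0 ∧
        RQ (S ⊗ₜ J) (U ⊗ₜ J) J' = 0 ∧
        RQ (S ⊗ₜ J) (U ⊗ₜ J') J'' = 0 :=
  RQ_vanishing_from_firstBianchi_general hV hQ RV RQ hskew Rfull hRfull hBianchi
end

section
/- Let V, Q, W be finite-dimensional real vector spaces with Q a 3-dimensional inner product space and dim V ≥ 3, and suppose curvature operators R^V : Λ²T → End(V), R^Q : Λ²T → so(Q), R^W : Λ²T → End(W) on T = (V⊗Q) ⊕ W combine to R = (R^V ⊗ id_Q + id_V ⊗ R^Q) ⊕ R^W satisfying the algebraic first Bianchi identity on T. If R^Q = 0 then R^V = 0; and conversely, if R^V = 0 and dim W > 0, then R^Q = 0. -/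
/-!
Evaluate the Bianchi identity at `x = (v₁ ⊗ q₁, w₁)`, `y = (v₂ ⊗ q₂, w₂)`, `z = (v ⊗ q, 0)`.
If `R^Q = 0`, its `V ⊗ Q`-component reads
`R^V(x,y) v ⊗ q + R^V(y,z) v₁ ⊗ q₁ + R^V(z,x) v₂ ⊗ q₂ = 0`.
Since `dim Q ≥ 3` we may take `q ∉ span {q₁, q₂}`; a linear form on `Q` vanishing on `q₁, q₂`
but not on `q` then isolates `R^V(x,y) v = 0`. The converse is symmetric, with
`v ∉ span {v₁, v₂}`, and bilinearity reduces everything to such pure tensors.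
-/

open TensorProduct Module RealInnerProductSpace

section
variable {K M N P L : Type*} [Field K] [AddCommGroup M] [Module K M] [AddCommGroup N] [Module K N]
  [AddCommGroup P] [Module K P] [AddCommGroup L] [Module K L]

theorem exists_notMem_span_pair_s10 [FiniteDimensional K M] (hM : 3 ≤ finrank K M) (a b : M) :
    ∃ c, c ∉ Submodule.span K {a, b} := by
  classical
  have hle : finrank K (Submodule.span K ({a, b} : Set M)) ≤ 2 :=
    (finrank_span_le_card _).trans (by simpa using Finset.card_le_two)
  by_contra! h
  rw [Submodule.eq_top_iff'.2 h, finrank_top] at hle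
  omega

theorem TensorProduct.eq_zero_of_tmul_add_tmul_add_tmul_eq_zero_left {a b c : N}
    (hc : c ∉ Submodule.span K {a, b}) {x y z : M}
    (h : x ⊗ₜ[K] c + y ⊗ₜ[K] a + z ⊗ₜ[K] b = 0) : x = 0 := by
  obtain ⟨f, hfc, hf⟩ := Submodule.exists_dual_map_eq_bot_of_notMem hc inferInstance
  have hfab := (Submodule.map_span_le f _ ⊥).1 hf.le
  simp only [Set.mem_insert_iff, Set.mem_singleton_iff, Submodule.mem_bot, forall_eq_or_imp,
    forall_eq] at hfab
  have := congrArg ((TensorProduct.rid K M).toLinearMap ∘ₗ f.lTensor M) h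
  simpa [hfab.1, hfab.2, hfc] using this

theorem TensorProduct.eq_zero_of_tmul_add_tmul_add_tmul_eq_zero_right {a b c : M}
    (hc : c ∉ Submodule.span K {a, b}) {x y z : N}
    (h : c ⊗ₜ[K] x + a ⊗ₜ[K] y + b ⊗ₜ[K] z = 0) : x = 0 :=
  eq_zero_of_tmul_add_tmul_add_tmul_eq_zero_left hc <| by
    simpa using congrArg (TensorProduct.comm K M N) h

theorem LinearMap.eq_zero_of_apply_tmul_prod {f : (M ⊗[K] N) × P →ₗ[K] L}
    (h : ∀ m n p, f (m ⊗ₜ n, p) = 0) : f = 0 := by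
  refine prod_ext (TensorProduct.ext' fun m n => h m n 0) (ext fun p => ?_)
  simpa using h 0 0 p

theorem LinearMap.eq_zero_of_apply₂_tmul_prod
    {B : (M ⊗[K] N) × P →ₗ[K] (M ⊗[K] N) × P →ₗ[K] L}
    (h : ∀ m n p m' n' p', B (m ⊗ₜ n, p) (m' ⊗ₜ n', p') = 0) : B = 0 :=
  eq_zero_of_apply_tmul_prod fun m n p => eq_zero_of_apply_tmul_prod (h m n p)

end

section
variable {K T : Type*} [Field K] [AddCommGroup T] [Module K T]

def SatisfiesBianchi (R : T → T → T →ₗ[K] T) : Prop :=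
  ∀ x y z, R x y z + R y z x + R z x y = 0

end

section
variable {K V Q W : Type*} [Field K] [AddCommGroup V] [Module K V] [AddCommGroup Q] [Module K Q]
  [AddCommGroup W] [Module K W]
  (RV : (V ⊗[K] Q) × W →ₗ[K] (V ⊗[K] Q) × W →ₗ[K] Module.End K V)
  (RQ : (V ⊗[K] Q) × W →ₗ[K] (V ⊗[K] Q) × W →ₗ[K] Module.End K Q)
  (RW : (V ⊗[K] Q) × W →ₗ[K] (V ⊗[K] Q) × W →ₗ[K] Module.End K W)

def tensorCurvature (x y : (V ⊗[K] Q) × W) : (V ⊗[K] Q) × W →ₗ[K] (V ⊗[K] Q) × W :=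
  (map (RV x y) LinearMap.id + map LinearMap.id (RQ x y)).prodMap (RW x y)

@[simp]
theorem fst_tensorCurvature_tmul (x y : (V ⊗[K] Q) × W) (v : V) (q : Q) (w : W) :
    (tensorCurvature RV RQ RW x y (v ⊗ₜ q, w)).1 = RV x y v ⊗ₜ q + v ⊗ₜ RQ x y q := by
  simp [tensorCurvature]

variable {RV RQ RW}

theorem SatisfiesBianchi.left_eq_zero_of_right_eq_zero
    (hR : SatisfiesBianchi (tensorCurvature RV RQ RW)) [FiniteDimensional K Q]
    (hQ : 3 ≤ finrank K Q) (hRQ : RQ = 0) : RV = 0 := by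
  refine LinearMap.eq_zero_of_apply₂_tmul_prod fun vx qx wx vy qy wy => ?_
  obtain ⟨q, hq⟩ := exists_notMem_span_pair_s10 hQ qx qy
  ext v
  rw [LinearMap.zero_apply]
  have h := congrArg Prod.fst (hR (vx ⊗ₜ qx, wx) (vy ⊗ₜ qy, wy) (v ⊗ₜ q, 0))
  simp only [Prod.fst_add, fst_tensorCurvature_tmul, hRQ, LinearMap.zero_apply, tmul_zero,
    add_zero, Prod.fst_zero] at h
  exact eq_zero_of_tmul_add_tmul_add_tmul_eq_zero_left hq h

theorem SatisfiesBianchi.right_eq_zero_of_left_eq_zero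
    (hR : SatisfiesBianchi (tensorCurvature RV RQ RW)) [FiniteDimensional K V]
    (hV : 3 ≤ finrank K V) (hRV : RV = 0) : RQ = 0 := by
  refine LinearMap.eq_zero_of_apply₂_tmul_prod fun vx qx wx vy qy wy => ?_
  obtain ⟨v, hv⟩ := exists_notMem_span_pair_s10 hV vx vy
  ext q
  rw [LinearMap.zero_apply]
  have h := congrArg Prod.fst (hR (vx ⊗ₜ qx, wx) (vy ⊗ₜ qy, wy) (v ⊗ₜ q, 0))
  simp only [Prod.fst_add, fst_tensorCurvature_tmul, hRV, LinearMap.zero_apply, zero_tmul,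
    zero_add, Prod.fst_zero] at h
  exact eq_zero_of_tmul_add_tmul_add_tmul_eq_zero_right hv h

end

theorem RQ_flat_iff_RV_flat_general
    {V W : Type*} [AddCommGroup V] [Module ℝ V] [AddCommGroup W] [Module ℝ W]
    {Q : Type*} [NormedAddCommGroup Q] [InnerProductSpace ℝ Q]
    [FiniteDimensional ℝ V] [FiniteDimensional ℝ Q]
    (hQ : finrank ℝ Q = 3) (hV : 3 ≤ finrank ℝ V)
    (RV : ((V ⊗[ℝ] Q) × W) →ₗ[ℝ] ((V ⊗[ℝ] Q) × W) →ₗ[ℝ] Module.End ℝ V)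
    (RQ : ((V ⊗[ℝ] Q) × W) →ₗ[ℝ] ((V ⊗[ℝ] Q) × W) →ₗ[ℝ] Module.End ℝ Q)
    (RW : ((V ⊗[ℝ] Q) × W) →ₗ[ℝ] ((V ⊗[ℝ] Q) × W) →ₗ[ℝ] Module.End ℝ W)
    (Rfull : ((V ⊗[ℝ] Q) × W) → ((V ⊗[ℝ] Q) × W) →
      ((V ⊗[ℝ] Q) × W) →ₗ[ℝ] ((V ⊗[ℝ] Q) × W))
    (hRfull : ∀ x y, Rfull x y =
      LinearMap.prodMap
        (TensorProduct.map (RV x y) LinearMap.id + TensorProduct.map LinearMap.id (RQ x y))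
        (RW x y))
    (hBianchi : ∀ x y z : (V ⊗[ℝ] Q) × W,
      Rfull x y z + Rfull y z x + Rfull z x y = 0) :
    ((∀ x y, RQ x y = 0) → (∀ x y, RV x y = 0)) ∧
    ((∀ x y, RV x y = 0) → 0 < finrank ℝ W → (∀ x y, RQ x y = 0)) := by
  obtain rfl : Rfull = tensorCurvature RV RQ RW := funext₂ hRfull
  have hR : SatisfiesBianchi (tensorCurvature RV RQ RW) := hBianchi
  refine ⟨fun hRQ => ?_, fun hRV _ => ?_⟩
  · have hRV := hR.left_eq_zero_of_right_eq_zero hQ.ge (LinearMap.ext₂ hRQ)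
    simp [hRV]
  · have hRQ := hR.right_eq_zero_of_left_eq_zero hV (LinearMap.ext₂ hRV)
    simp [hRQ]

/-- Let `V, Q, W` be finite-dimensional real vector spaces with
`Q` a 3-dimensional inner product space and `dim V ≥ 3`, and suppose the curvature
operators `R^V : Λ²T → End(V)`, `R^Q : Λ²T → so(Q)`, `R^W : Λ²T → End(W)` on
`T = (V⊗Q) ⊕ W` combine to `R = (R^V ⊗ id_Q + id_V ⊗ R^Q) ⊕ R^W` satisfying the
algebraic first Bianchi identity on `T`. If `R^Q = 0` then `R^V = 0`; conversely,
if `R^V = 0` and `dim W > 0`, then `R^Q = 0`. -/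
theorem RQ_flat_iff_RV_flat
    {V W : Type*} [AddCommGroup V] [Module ℝ V] [AddCommGroup W] [Module ℝ W]
    {Q : Type*} [NormedAddCommGroup Q] [InnerProductSpace ℝ Q]
    [FiniteDimensional ℝ V] [FiniteDimensional ℝ Q] [FiniteDimensional ℝ W]
    (hQ : finrank ℝ Q = 3) (hV : 3 ≤ finrank ℝ V)
    (RV : ((V ⊗[ℝ] Q) × W) →ₗ[ℝ] ((V ⊗[ℝ] Q) × W) →ₗ[ℝ] Module.End ℝ V)
    (RQ : ((V ⊗[ℝ] Q) × W) →ₗ[ℝ] ((V ⊗[ℝ] Q) × W) →ₗ[ℝ] Module.End ℝ Q)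
    (RW : ((V ⊗[ℝ] Q) × W) →ₗ[ℝ] ((V ⊗[ℝ] Q) × W) →ₗ[ℝ] Module.End ℝ W)
    (hAltV : ∀ t, RV t t = 0) (hAltQ : ∀ t, RQ t t = 0) (hAltW : ∀ t, RW t t = 0)
    -- `R^Q` takes values in the skew-symmetric endomorphisms of `Q`
    (hskew : ∀ (x y : (V ⊗[ℝ] Q) × W) (A : Q), ⟪RQ x y A, A⟫ = 0)
    (Rfull : ((V ⊗[ℝ] Q) × W) → ((V ⊗[ℝ] Q) × W) →
      ((V ⊗[ℝ] Q) × W) →ₗ[ℝ] ((V ⊗[ℝ] Q) × W))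
    (hRfull : ∀ x y, Rfull x y =
      LinearMap.prodMap
        (TensorProduct.map (RV x y) LinearMap.id + TensorProduct.map LinearMap.id (RQ x y))
        (RW x y))
    (hBianchi : ∀ x y z : (V ⊗[ℝ] Q) × W,
      Rfull x y z + Rfull y z x + Rfull z x y = 0) :
    ((∀ x y, RQ x y = 0) → (∀ x y, RV x y = 0)) ∧
    ((∀ x y, RV x y = 0) → 0 < finrank ℝ W → (∀ x y, RQ x y = 0)) :=
  RQ_flat_iff_RV_flat_general hQ hV RV RQ RW Rfull hRfull hBianchi
end

section
/- The group G_{l,m} = GL(l,ℝ) × (Sp(1)·GL(m,ℍ)) is isomorphic to the group of quaternionic linear isomorphisms of ℍ^{l+m} that preserve both the real subspace ℝ^l and the subspace (Im ℍ)^l × ℍ^m. -/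
noncomputable section

open scoped Quaternion

/-- The group `Sp(1)` of unit quaternions, as a subgroup of `ℍˣ`. -/
def Sp1 : Subgroup ℍ[ℝ]ˣ where
  carrier := {a | ‖(a : ℍ[ℝ])‖ = 1}
  one_mem' := by simp
  mul_mem' := by
    intro a b ha hb
    simp only [Set.mem_setOf_eq, Units.val_mul, norm_mul] at *
    rw [ha, hb, mul_one]
  inv_mem' := by
    intro a ha
    simp only [Set.mem_setOf_eq] at *
    rw [Units.val_inv_eq_inv_val, norm_inv, ha, inv_one]

/-- `GL(I, ℍ)`, the group of invertible quaternionic `I × I` matrices. -/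
abbrev GLH (I : Type) [Fintype I] [DecidableEq I] := (Matrix I I ℍ[ℝ])ˣ

/-- The action of `Sp(1) × GL(I,ℍ)` on `ℍ^I` by `(±(a,A), q) ↦ a q A⁻¹`. -/
def qAct {I : Type} [Fintype I] [DecidableEq I]
    (g : Sp1 × GLH I) (v : I → ℍ[ℝ]) : I → ℍ[ℝ] :=
  fun i => g.1.val.val * Matrix.vecMul v (g.2⁻¹).val i

lemma qAct_one {I : Type} [Fintype I] [DecidableEq I] (v : I → ℍ[ℝ]) :
    qAct (1 : Sp1 × GLH I) v = v := by
  funext i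
  simp [qAct, Matrix.vecMul_one]

lemma qAct_mul {I : Type} [Fintype I] [DecidableEq I]
    (g h : Sp1 × GLH I) (v : I → ℍ[ℝ]) :
    qAct (g * h) v = qAct g (qAct h v) := by
  funext i
  simp only [qAct, Prod.fst_mul, Prod.snd_mul, mul_inv_rev, Units.val_mul,
    Subgroup.coe_mul, Matrix.vecMul, dotProduct, Matrix.mul_apply,
    Finset.mul_sum, Finset.sum_mul, mul_assoc]
  rw [Finset.sum_comm]

/-- The subgroup of `Sp(1) × GL(I,ℍ)` preserving two given subsets of `ℍ^I`. -/
def stab {I : Type} [Fintype I] [DecidableEq I] (S₁ S₂ : Set (I → ℍ[ℝ])) :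
    Subgroup (Sp1 × GLH I) where
  carrier := {g | qAct g '' S₁ = S₁ ∧ qAct g '' S₂ = S₂}
  one_mem' := by
    have h : ∀ S : Set (I → ℍ[ℝ]), qAct (1 : Sp1 × GLH I) '' S = S := fun S => by
      rw [show qAct (1 : Sp1 × GLH I) = id from funext qAct_one, Set.image_id]
    exact ⟨h S₁, h S₂⟩
  mul_mem' := by
    intro a b ha hb
    have key : ∀ S : Set (I → ℍ[ℝ]), qAct b '' S = S → qAct a '' S = S →
        qAct (a * b) '' S = S := fun S h1 h2 => by
      rw [show qAct (a * b) = qAct a ∘ qAct b from funext (qAct_mul a b),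
        Set.image_comp, h1, h2]
    exact ⟨key _ hb.1 ha.1, key _ hb.2 ha.2⟩
  inv_mem' := by
    intro a ha
    have key : ∀ S : Set (I → ℍ[ℝ]), qAct a '' S = S → qAct a⁻¹ '' S = S := by
      intro S h
      conv_lhs => rw [← h]
      rw [← Set.image_comp, ← show qAct (a⁻¹ * a) = qAct a⁻¹ ∘ qAct a from
        funext (qAct_mul a⁻¹ a), inv_mul_cancel,
        show qAct (1 : Sp1 × GLH I) = id from funext qAct_one, Set.image_id]
    exact ⟨key _ ha.1, key _ ha.2⟩

/-- The central element `(-1, -1)` of `Sp(1) × GL(I,ℍ)`. -/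
def negPair (I : Type) [Fintype I] [DecidableEq I] : Sp1 × GLH I :=
  (⟨-1, by simp [Sp1]⟩, -1)

/-- The diagonal `±1` subgroup of `Sp(1) × GL(I,ℍ)`. -/
def diagPM (I : Type) [Fintype I] [DecidableEq I] : Subgroup (Sp1 × GLH I) :=
  Subgroup.zpowers (negPair I)

lemma negPair_commute {I : Type} [Fintype I] [DecidableEq I] (g : Sp1 × GLH I) :
    Commute g (negPair I) := by
  have h1 : Commute g.1 (negPair I).1 := by
    apply Subtype.ext
    show (g.1 : ℍ[ℝ]ˣ) * ((negPair I).1 : ℍ[ℝ]ˣ) = _ * _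
    simp [negPair, mul_neg, neg_mul]
  have h2 : Commute g.2 (negPair I).2 := by
    show g.2 * (-1) = (-1) * g.2
    simp [mul_neg, neg_mul]
  exact Prod.ext h1 h2

instance diagPM_normal (I : Type) [Fintype I] [DecidableEq I] : (diagPM I).Normal := by
  constructor
  intro n hn g
  obtain ⟨k, rfl⟩ := Subgroup.mem_zpowers_iff.mp hn
  have h : Commute g ((negPair I) ^ k) := ((negPair_commute g).zpow_right k)
  rw [h.eq, mul_inv_cancel_right]
  exact Subgroup.zpow_mem _ (Subgroup.mem_zpowers _) k

/-- `Sp(1)·GL(I,ℍ)`, the quotient of `Sp(1) × GL(I,ℍ)` by the diagonal `±1`. -/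
abbrev SpGLH (I : Type) [Fintype I] [DecidableEq I] :=
  (Sp1 × GLH I) ⧸ diagPM I

/-- `GL(l,ℝ)`. -/
abbrev GLR (l : ℕ) := (Matrix (Fin l) (Fin l) ℝ)ˣ

/-- The group `G_{l,m} = GL(l,ℝ) × (Sp(1)·GL(m,ℍ))`. -/
abbrev Glm (l m : ℕ) := GLR l × SpGLH (Fin m)

/-- The subset `ℝ^l ⊂ ℍ^{l+m}`: real entries in the first `l` coordinates,
zero in the last `m`. -/
def realSubset (l m : ℕ) : Set (Sum (Fin l) (Fin m) → ℍ[ℝ]) :=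
  {v | (∀ i : Fin l, ∃ r : ℝ, v (Sum.inl i) = (r : ℍ[ℝ])) ∧
       (∀ j : Fin m, v (Sum.inr j) = 0)}

/-- The subset `(Im ℍ)^l × ℍ^m ⊂ ℍ^{l+m}`: imaginary quaternions in the first `l`
coordinates. -/
def imSubset (l m : ℕ) : Set (Sum (Fin l) (Fin m) → ℍ[ℝ]) :=
  {v | ∀ i : Fin l, (v (Sum.inl i)).re = 0}

/-!
The isomorphism is induced by `(P, (a, C)) ↦ (a, diag(a P, C))`. This element sends the first `l`
coordinates of `q` to `a (q P⁻¹) a⁻¹`, and conjugation by a unit quaternion fixes the reals and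
preserves real parts, so both subsets are preserved. Conversely, testing a stabilizing `(a, A)` on
the vectors `e_i` (`i ≤ l`) and `q e_k` (`k > l`) forces `A⁻¹ = diag(a⁻¹ R, D)` with `R` real,
so the embedding is onto the stabilizer. It is injective and pulls the diagonal `±1` of
`Sp(1) × GL(l+m,ℍ)` back to `1 × ±1`, so it descends to the quotients.
-/

open Matrix

section Blocks

variable {ι κ R : Type*} [Fintype ι] [DecidableEq ι] [Fintype κ] [DecidableEq κ] [Ring R]

def Matrix.fromBlocksDiagHom : Matrix ι ι R × Matrix κ κ R →* Matrix (ι ⊕ κ) (ι ⊕ κ) R where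
  toFun X := fromBlocks X.1 0 0 X.2
  map_one' := fromBlocks_one
  map_mul' X Y := by simp [fromBlocks_multiply]

def Matrix.fromBlocksDiagUnits :
    (Matrix ι ι R)ˣ × (Matrix κ κ R)ˣ →* (Matrix (ι ⊕ κ) (ι ⊕ κ) R)ˣ :=
  (Units.map fromBlocksDiagHom).comp MulEquiv.prodUnits.symm.toMonoidHom

theorem Matrix.fromBlocksDiagUnits_injective :
    Function.Injective (fromBlocksDiagUnits : (Matrix ι ι R)ˣ × (Matrix κ κ R)ˣ → _) := by
  intro X Y h
  have h' := fromBlocks_inj.mp (congrArg Units.val h)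
  exact Prod.ext (Units.ext h'.1) (Units.ext h'.2.2.2)

theorem Matrix.fromBlocks_diag_mul_eq_one {X X' : Matrix ι ι R} {Y Y' : Matrix κ κ R}
    (h : fromBlocks X 0 0 Y * fromBlocks X' 0 0 Y' = 1) : X * X' = 1 ∧ Y * Y' = 1 := by
  rw [fromBlocks_multiply, ← fromBlocks_one, fromBlocks_inj] at h
  simpa using And.intro h.1 h.2.2.2

end Blocks

section SmulMap

variable {ι K A : Type*} [Fintype ι] [CommRing K] [Ring A] [Algebra K A]

theorem Matrix.smul_map_mul_smul_map (a b : A) (P Q : Matrix ι ι K) :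
    (a • P.map (algebraMap K A)) * (b • Q.map (algebraMap K A)) =
      (a * b) • (P * Q).map (algebraMap K A) := by
  ext i j
  simp only [mul_apply, Matrix.smul_apply, map_apply, smul_eq_mul, Finset.mul_sum, map_sum]
  refine Finset.sum_congr rfl fun k _ => ?_
  simp only [map_mul, mul_assoc]
  rw [← mul_assoc b, ← Algebra.commutes (P i k) b, mul_assoc]

variable [DecidableEq ι]

theorem Matrix.mul_eq_one_of_smul_map_mul_smul_map (hinj : Function.Injective (algebraMap K A))
    {a b : A} (hab : a * b = 1) {P Q : Matrix ι ι K}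
    (h : (a • P.map (algebraMap K A)) * (b • Q.map (algebraMap K A)) = 1) : P * Q = 1 := by
  rw [smul_map_mul_smul_map, hab, one_smul,
    ← Matrix.map_one (algebraMap K A) (map_zero _) (map_one _)] at h
  exact Matrix.map_injective hinj h

def Matrix.smulMapHom : A × Matrix ι ι K →* Matrix ι ι A where
  toFun x := x.1 • x.2.map (algebraMap K A)
  map_one' := by simp [Matrix.map_one]
  map_mul' x y := (smul_map_mul_smul_map x.1 y.1 x.2 y.2).symm

def Matrix.smulMapUnits : Aˣ × (Matrix ι ι K)ˣ →* (Matrix ι ι A)ˣ :=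
  (Units.map smulMapHom).comp MulEquiv.prodUnits.symm.toMonoidHom

@[simp]
theorem Matrix.smulMapUnits_val (x : Aˣ × (Matrix ι ι K)ˣ) :
    (smulMapUnits x : Matrix ι ι A) = x.1.val • x.2.val.map (algebraMap K A) :=
  rfl

end SmulMap

section QuotientEquivs

variable {G H K : Type*} [Group G] [Group H] [Group K]

def QuotientGroup.prodQuotientMulEquiv (N : Subgroup H) [N.Normal] :
    G × H ⧸ N ≃* (G × H) ⧸ (⊥ : Subgroup G).prod N :=
  ((QuotientGroup.quotientBot (G := G)).symm.prodCongr (MulEquiv.refl _)).trans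
    (QuotientGroup.prodMulEquiv ⊥ N).symm

def QuotientGroup.quotientComapEquivMapRange (φ : G →* K) (N : Subgroup K) [N.Normal] :
    G ⧸ N.comap φ ≃* φ.range.map (mk' N) :=
  (quotientMulEquivOfEq (by rw [← MonoidHom.comap_ker, ker_mk'])).trans
    ((quotientKerEquivRange _).trans (MulEquiv.subgroupCongr (MonoidHom.map_range _ _).symm))

end QuotientEquivs

namespace Quaternion

variable {R : Type*} [CommRing R]

theorem re_sum {α : Type*} (s : Finset α) (f : α → ℍ[R]) :
    (∑ i ∈ s, f i).re = ∑ i ∈ s, (f i).re :=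
  map_sum (QuaternionAlgebra.reₗ (-1) 0 (-1)) f s

theorem re_mul_comm (a b : ℍ[R]) : (a * b).re = (b * a).re := by
  simp only [re_mul]; ring

theorem re_units_conj (u : ℍ[R]ˣ) (q : ℍ[R]) : (u * q * ↑u⁻¹ : ℍ[R]).re = q.re := by
  rw [re_mul_comm, ← mul_assoc, u.inv_mul, one_mul]

theorem units_conj_coe (u : ℍ[R]ˣ) (r : R) : (u * (r : ℍ[R]) * ↑u⁻¹ : ℍ[R]) = r := by
  rw [← coe_commutes, mul_assoc, u.mul_inv, mul_one]

end Quaternion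

section Action

variable {I : Type} [Fintype I] [DecidableEq I]

theorem qAct_apply (g : Sp1 × GLH I) (v : I → ℍ[ℝ]) (i : I) :
    qAct g v i = g.1.val.val * ∑ k, v k * (g.2⁻¹).val k i :=
  rfl

theorem qAct_single (g : Sp1 × GLH I) (k : I) (q : ℍ[ℝ]) (i : I) :
    qAct g (Pi.single k q) i = g.1.val.val * (q * (g.2⁻¹).val k i) := by
  simp [qAct_apply, Pi.single_apply]

theorem image_qAct_eq_of_mapsTo {g : Sp1 × GLH I} {S : Set (I → ℍ[ℝ])}
    (h : Set.MapsTo (qAct g) S S) (h' : Set.MapsTo (qAct g⁻¹) S S) : qAct g '' S = S := by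
  refine h.image_subset.antisymm fun v hv => ⟨qAct g⁻¹ v, h' hv, ?_⟩
  rw [← qAct_mul, mul_inv_cancel, qAct_one]

theorem negPair_sq : negPair I ^ 2 = 1 := by
  ext <;> simp [negPair, sq]

theorem mem_diagPM_iff {x : Sp1 × GLH I} : x ∈ diagPM I ↔ x = 1 ∨ x = negPair I := by
  refine ⟨fun hx => ?_, by rintro (rfl | rfl) <;> simp [diagPM, Subgroup.mem_zpowers]⟩
  obtain ⟨k, rfl⟩ := Subgroup.mem_zpowers_iff.mp hx
  rw [zpow_eq_zpow_emod' k negPair_sq]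
  rcases Int.emod_two_eq k with h | h <;> simp [h]

end Action

def blockEmbedding (l m : ℕ) : GLR l × (Sp1 × GLH (Fin m)) →* Sp1 × GLH (Fin l ⊕ Fin m) where
  toFun x := (x.2.1, fromBlocksDiagUnits (smulMapUnits ((x.2.1 : ℍ[ℝ]ˣ), x.1), x.2.2))
  map_one' := by
    simp only [Prod.snd_one, Prod.fst_one, OneMemClass.coe_one, Prod.mk_one_one, map_one]
  map_mul' x y := by simp [← Prod.mk_mul_mk]

variable {l m : ℕ}

@[simp]
theorem blockEmbedding_fst (x : GLR l × (Sp1 × GLH (Fin m))) :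
    (blockEmbedding l m x).1 = x.2.1 :=
  rfl

theorem blockEmbedding_inv_val (P : GLR l) (a : Sp1) (C : GLH (Fin m)) :
    ((blockEmbedding l m (P, a, C)).2⁻¹ : GLH (Fin l ⊕ Fin m)).val =
      fromBlocks (((a⁻¹ : Sp1) : ℍ[ℝ]ˣ).val • (P⁻¹).val.map (algebraMap ℝ ℍ[ℝ])) 0 0 (C⁻¹).val :=
  rfl

theorem qAct_blockEmbedding_inl (P : GLR l) (a : Sp1) (C : GLH (Fin m))
    (v : Fin l ⊕ Fin m → ℍ[ℝ]) (j : Fin l) :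
    qAct (blockEmbedding l m (P, a, C)) v (Sum.inl j) =
      (a : ℍ[ℝ]ˣ) * (∑ i, v (Sum.inl i) * ((P⁻¹).val i j : ℍ[ℝ])) * ↑(a : ℍ[ℝ]ˣ)⁻¹ := by
  rw [qAct_apply, blockEmbedding_inv_val, Fintype.sum_sum_type]
  simp only [blockEmbedding_fst, InvMemClass.coe_inv, Units.val_inv_eq_inv_val, coe_units_inv,
    Quaternion.algebraMap_def, fromBlocks_apply₁₁, Matrix.smul_apply, map_apply, smul_eq_mul,
    fromBlocks_apply₂₁, Matrix.zero_apply, mul_zero, Finset.sum_const_zero, add_zero, mul_assoc,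
    Finset.sum_mul, mul_eq_mul_left_iff, Units.ne_zero, or_false]
  exact Finset.sum_congr rfl fun i _ => by rw [Quaternion.coe_commutes]

theorem qAct_blockEmbedding_inr (P : GLR l) (a : Sp1) (C : GLH (Fin m))
    (v : Fin l ⊕ Fin m → ℍ[ℝ]) (j : Fin m) :
    qAct (blockEmbedding l m (P, a, C)) v (Sum.inr j) =
      (a : ℍ[ℝ]ˣ) * ∑ k, v (Sum.inr k) * (C⁻¹).val k j := by
  rw [qAct_apply, blockEmbedding_inv_val, Fintype.sum_sum_type]
  simp

theorem mapsTo_blockEmbedding_realSubset (x : GLR l × (Sp1 × GLH (Fin m))) :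
    Set.MapsTo (qAct (blockEmbedding l m x)) (realSubset l m) (realSubset l m) := by
  obtain ⟨P, a, C⟩ := x
  rintro v ⟨hreal, hzero⟩
  choose r hr using hreal
  refine ⟨fun j => ⟨∑ i, r i * (P⁻¹).val i j, ?_⟩, fun k => ?_⟩
  · have hsum : ∑ i, v (Sum.inl i) * ((P⁻¹).val i j : ℍ[ℝ]) =
        ((∑ i, r i * (P⁻¹).val i j : ℝ) : ℍ[ℝ]) := by
      simp only [hr, ← Quaternion.coe_mul]
      exact (map_sum (algebraMap ℝ ℍ[ℝ]) _ _).symm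
    rw [qAct_blockEmbedding_inl, hsum, Quaternion.units_conj_coe]
  · simp [qAct_blockEmbedding_inr, hzero]

theorem mapsTo_blockEmbedding_imSubset (x : GLR l × (Sp1 × GLH (Fin m))) :
    Set.MapsTo (qAct (blockEmbedding l m x)) (imSubset l m) (imSubset l m) := by
  obtain ⟨P, a, C⟩ := x
  intro v hv j
  rw [qAct_blockEmbedding_inl, Quaternion.re_units_conj, Quaternion.re_sum]
  exact Finset.sum_eq_zero fun i _ => by
    rw [Quaternion.mul_coe_eq_smul, Quaternion.re_smul, hv i, smul_zero]

theorem blockEmbedding_mem_stab (x : GLR l × (Sp1 × GLH (Fin m))) :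
    blockEmbedding l m x ∈ stab (realSubset l m) (imSubset l m) := by
  have hinv := map_inv (blockEmbedding l m) x
  refine ⟨image_qAct_eq_of_mapsTo ?_ ?_, image_qAct_eq_of_mapsTo ?_ ?_⟩ <;>
    simp only [← hinv, mapsTo_blockEmbedding_realSubset, mapsTo_blockEmbedding_imSubset]

section BlockStructure

variable {g : Sp1 × GLH (Fin l ⊕ Fin m)}

theorem single_inl_one_mem_realSubset (i : Fin l) :
    (Pi.single (Sum.inl i) 1 : Fin l ⊕ Fin m → ℍ[ℝ]) ∈ realSubset l m := by
  refine ⟨fun i' => ⟨if i' = i then 1 else 0, ?_⟩, fun k => by simp⟩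
  by_cases h : i' = i <;> simp [h]

theorem single_inr_mem_imSubset (k : Fin m) (q : ℍ[ℝ]) :
    (Pi.single (Sum.inr k) q : Fin l ⊕ Fin m → ℍ[ℝ]) ∈ imSubset l m := by
  intro i
  simp

theorem toBlocks₁₂_inv_eq_zero_of_mapsTo_realSubset
    (h : Set.MapsTo (qAct g) (realSubset l m) (realSubset l m)) :
    (g.2⁻¹).val.toBlocks₁₂ = 0 := by
  refine Matrix.ext fun i k => ?_
  have hk := (h (single_inl_one_mem_realSubset i)).2 k
  rw [qAct_single, one_mul] at hk
  exact (Units.mul_right_eq_zero _).mp hk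

theorem exists_coe_eq_mul_inv_of_mapsTo_realSubset
    (h : Set.MapsTo (qAct g) (realSubset l m) (realSubset l m)) (i j : Fin l) :
    ∃ r : ℝ, g.1.val.val * (g.2⁻¹).val (Sum.inl i) (Sum.inl j) = r := by
  simpa only [qAct_single, one_mul] using (h (single_inl_one_mem_realSubset i)).1 j

theorem toBlocks₂₁_inv_eq_zero_of_mapsTo_imSubset
    (h : Set.MapsTo (qAct g) (imSubset l m) (imSubset l m)) :
    (g.2⁻¹).val.toBlocks₂₁ = 0 := by
  refine Matrix.ext fun k j => ?_
  set b := (g.2⁻¹).val (Sum.inr k) (Sum.inl j)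
  -- the image of this test vector has `j`-th coordinate `star b * b`, of real part `‖b‖²`
  have hj := h (single_inr_mem_imSubset k (↑(g.1.val)⁻¹ * star b)) j
  rw [qAct_single, ← mul_assoc, ← mul_assoc, Units.mul_inv, one_mul, Quaternion.star_mul_self,
    Quaternion.re_coe] at hj
  exact Quaternion.normSq_eq_zero.mp hj

theorem exists_inv_eq_fromBlocks_of_mem_stab (hg : g ∈ stab (realSubset l m) (imSubset l m)) :
    ∃ R : Matrix (Fin l) (Fin l) ℝ, (g.2⁻¹).val =
      fromBlocks ((g.1.val⁻¹ : ℍ[ℝ]ˣ).val • R.map (algebraMap ℝ ℍ[ℝ])) 0 0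
        (g.2⁻¹).val.toBlocks₂₂ := by
  have h₁ := (Set.mapsTo_image (qAct g) _).mono_right hg.1.subset
  have h₂ := (Set.mapsTo_image (qAct g) _).mono_right hg.2.subset
  choose R hR using exists_coe_eq_mul_inv_of_mapsTo_realSubset h₁
  refine ⟨R, (fromBlocks_toBlocks _).symm.trans ?_⟩
  rw [toBlocks₁₂_inv_eq_zero_of_mapsTo_realSubset h₁,
    toBlocks₂₁_inv_eq_zero_of_mapsTo_imSubset h₂]
  congr 1
  refine Matrix.ext fun i j => ?_
  show _ = (g.1.val⁻¹ : ℍ[ℝ]ˣ).val * (R i j : ℍ[ℝ])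
  rw [← hR, ← mul_assoc, Units.inv_mul, one_mul]
  rfl

end BlockStructure

theorem stab_le_range_blockEmbedding :
    stab (realSubset l m) (imSubset l m) ≤ (blockEmbedding l m).range := by
  intro g hg
  obtain ⟨R, hR⟩ := exists_inv_eq_fromBlocks_of_mem_stab hg
  obtain ⟨R', hR'⟩ := exists_inv_eq_fromBlocks_of_mem_stab (inv_mem hg)
  simp only [Prod.snd_inv, Prod.fst_inv, inv_inv, Subgroup.coe_inv] at hR'
  obtain ⟨hX, hY⟩ := fromBlocks_diag_mul_eq_one (hR' ▸ hR ▸ g.2.mul_inv)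
  obtain ⟨hX', hY'⟩ := fromBlocks_diag_mul_eq_one (hR ▸ hR' ▸ g.2.inv_mul)
  have hinj := (algebraMap ℝ ℍ[ℝ]).injective
  let P : GLR l := ⟨R', R, mul_eq_one_of_smul_map_mul_smul_map hinj (Units.mul_inv _) hX,
    mul_eq_one_of_smul_map_mul_smul_map hinj (Units.inv_mul _) hX'⟩
  exact ⟨(P, g.1, ⟨_, _, hY, hY'⟩), Prod.ext rfl (Units.ext hR'.symm)⟩

theorem range_blockEmbedding :
    (blockEmbedding l m).range = stab (realSubset l m) (imSubset l m) :=
  le_antisymm (by rintro _ ⟨x, rfl⟩; exact blockEmbedding_mem_stab x) stab_le_range_blockEmbedding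

theorem blockEmbedding_injective : Function.Injective (blockEmbedding l m) := by
  rw [injective_iff_map_eq_one]
  rintro ⟨P, a, C⟩ h
  obtain rfl : a = 1 := congrArg Prod.fst h
  have hPC := fromBlocksDiagUnits_injective ((congrArg Prod.snd h).trans (map_one _).symm)
  simp only [Prod.ext_iff, Units.ext_iff] at hPC
  have hP : P.val.map (algebraMap ℝ ℍ[ℝ]) = 1 := by simpa using hPC.1
  rw [← Matrix.map_one (algebraMap ℝ ℍ[ℝ]) (map_zero _) (map_one _)] at hP
  exact Prod.ext (Units.ext (map_injective (algebraMap ℝ ℍ[ℝ]).injective hP))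
    (Prod.ext rfl (Units.ext hPC.2))

theorem blockEmbedding_one_negPair :
    blockEmbedding l m (1, negPair (Fin m)) = negPair (Fin l ⊕ Fin m) := by
  refine Prod.ext rfl (Units.ext ?_)
  show fromBlocks (((-1 : ℍ[ℝ]ˣ) : ℍ[ℝ]) • (1 : Matrix (Fin l) (Fin l) ℝ).map (algebraMap ℝ ℍ[ℝ]))
    0 0 (-1) = -1
  rw [Matrix.map_one _ (map_zero _) (map_one _), Units.val_neg, Units.val_one, neg_one_smul,
    ← fromBlocks_one, fromBlocks_neg, neg_zero, neg_zero]

theorem comap_blockEmbedding_diagPM :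
    (diagPM (Fin l ⊕ Fin m)).comap (blockEmbedding l m) =
      (⊥ : Subgroup (GLR l)).prod (diagPM (Fin m)) := by
  ext x
  simp only [Subgroup.mem_comap, mem_diagPM_iff, Subgroup.mem_prod, Subgroup.mem_bot]
  rw [← blockEmbedding_one_negPair, ← map_one (blockEmbedding l m),
    blockEmbedding_injective.eq_iff, blockEmbedding_injective.eq_iff]
  obtain ⟨P, z⟩ := x
  simp only [Prod.ext_iff, Prod.fst_one, Prod.snd_one]
  tauto

/-- The group `G_{l,m} = GL(l,ℝ) × (Sp(1)·GL(m,ℍ))` is isomorphic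
to the group of quaternionic linear isomorphisms of `ℍ^{l+m}` (i.e. elements of
`Sp(1)·GL(l+m,ℍ)`, acting by `q ↦ a q A⁻¹`) that preserve both `ℝ^l` and
`(Im ℍ)^l × ℍ^m`. -/
theorem Glm_iso_stabilizer (l m : ℕ) :
    Nonempty (Glm l m ≃*
      ((stab (realSubset l m) (imSubset l m)).map
        (QuotientGroup.mk' (diagPM (Sum (Fin l) (Fin m)))))) := by
  rw [← range_blockEmbedding]
  exact ⟨(QuotientGroup.prodQuotientMulEquiv (diagPM (Fin m))).trans
    ((QuotientGroup.quotientMulEquivOfEq comap_blockEmbedding_diagPM.symm).trans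
      (QuotientGroup.quotientComapEquivMapRange _ _))⟩

end
end

section
/- With the notation of the generalized standard horizontal vector fields B(ξ): for any u in the frame bundle P of E and any ξ, η in the typical fibre F, the generalized torsion T of the connection ∇ with respect to ρ satisfies T(uξ, uη) = −dπ([B(ξ), B(η)]_u). -/
noncomputable section

/-- The Lie bracket of vector fields on a normed space (local coordinates):
`[X,Y](p) = dY_p(X_p) − dX_p(Y_p)`. -/
def lieBkt {V : Type*} [NormedAddCommGroup V] [NormedSpace ℝ V]
    (X Y : V → V) : V → V :=
  fun p => fderiv ℝ Y p (X p) - fderiv ℝ X p (Y p)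

/-- (Local form, in a trivialization of the bundle `E` with
typical fibre `F` over `M`, so that the frame bundle is `P = M × GL(F)` with
projection `π = pr₁`, the connection `∇` is given by the local connection form
`ω`, and the generalized standard horizontal vector field of `ξ ∈ F` is
`B(ξ)_{(x,g)} = (ρ_x(gξ), −ω_x(ρ_x(gξ))∘g)`.)  For any `u = (x,g) ∈ P` and
`ξ, η ∈ F`, the generalized torsion
`T(s₁,s₂) = ρ(∇_{ρ∘s₁}s₂ − ∇_{ρ∘s₂}s₁) − [ρ∘s₁, ρ∘s₂]` of `∇` with respect to
`ρ : E → TM` satisfies `T(uξ, uη) = −dπ([B(ξ), B(η)]_u)`, where the left-hand side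
is computed from any smooth sections `s₁, s₂` with `s₁(x) = gξ`, `s₂(x) = gη`. -/
theorem generalized_torsion_eq_neg_dpi_bracket
    {EM F : Type*} [NormedAddCommGroup EM] [NormedSpace ℝ EM]
    [NormedAddCommGroup F] [NormedSpace ℝ F]
    -- the bundle morphism `ρ : E → TM`
    (ρ : EM → (F →L[ℝ] EM)) (hρ : ContDiff ℝ (⊤ : ℕ∞) ρ)
    -- the local connection form of `∇`
    (ω : EM → (EM →L[ℝ] (F →L[ℝ] F))) (hω : ContDiff ℝ (⊤ : ℕ∞) ω)
    -- the covariant derivative of `∇` in the trivialization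
    (cov : (EM → EM) → (EM → F) → (EM → F))
    (hcov : ∀ (X : EM → EM) (s : EM → F) (y : EM),
      cov X s y = fderiv ℝ s y (X y) + ω y (X y) (s y))
    -- the standard horizontal vector fields on `P = M × GL(F)`
    (B : F → (EM × (F →L[ℝ] F)) → (EM × (F →L[ℝ] F)))
    (hB : ∀ (ξ : F) (x : EM) (g : F →L[ℝ] F),
      B ξ (x, g) = (ρ x (g ξ), -((ω x (ρ x (g ξ))).comp g)))
    -- a point `u = (x, g)` of the frame bundle, and `ξ, η` in the typical fibre
    (x : EM) (g : F ≃L[ℝ] F) (ξ η : F)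
    -- sections through `uξ` and `uη`
    (s₁ s₂ : EM → F) (hs₁ : ContDiff ℝ (⊤ : ℕ∞) s₁) (hs₂ : ContDiff ℝ (⊤ : ℕ∞) s₂)
    (hs₁x : s₁ x = g ξ) (hs₂x : s₂ x = g η) :
    ρ x (cov (fun y => ρ y (s₁ y)) s₂ x - cov (fun y => ρ y (s₂ y)) s₁ x)
        - lieBkt (fun y => ρ y (s₁ y)) (fun y => ρ y (s₂ y)) x
      = -(lieBkt (B ξ) (B η) (x, (g : F →L[ℝ] F))).1 := by
  classical
  set gc : F →L[ℝ] F := (g : F →L[ℝ] F) with hgc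
  -- rewrite B as explicit functions
  have hBfun : ∀ ζ : F, B ζ = fun p : EM × (F →L[ℝ] F) =>
      (ρ p.1 (p.2 ζ), -((ω p.1 (ρ p.1 (p.2 ζ))).comp p.2)) := by
    intro ζ; funext p; obtain ⟨a, b⟩ := p; exact hB ζ a b
  -- basic differentiability facts
  have hρd : ∀ y, HasFDerivAt ρ (fderiv ℝ ρ y) y :=
    fun y => (hρ.differentiable (by simp) y).hasFDerivAt
  have hs₁d : HasFDerivAt s₁ (fderiv ℝ s₁ x) x := (hs₁.differentiable (by simp) x).hasFDerivAt
  have hs₂d : HasFDerivAt s₂ (fderiv ℝ s₂ x) x := (hs₂.differentiable (by simp) x).hasFDerivAt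
  -- derivatives of the base vector fields
  have hF₁ : HasFDerivAt (fun y => ρ y (s₁ y))
      ((ρ x).comp (fderiv ℝ s₁ x) + (fderiv ℝ ρ x).flip (s₁ x)) x :=
    (hρd x).clm_apply hs₁d
  have hF₂ : HasFDerivAt (fun y => ρ y (s₂ y))
      ((ρ x).comp (fderiv ℝ s₂ x) + (fderiv ℝ ρ x).flip (s₂ x)) x :=
    (hρd x).clm_apply hs₂d
  -- derivatives on P = EM × (F →L F)
  set p₀ : EM × (F →L[ℝ] F) := (x, gc) with hp₀
  have hfst : HasFDerivAt (fun p : EM × (F →L[ℝ] F) => p.1)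
      (ContinuousLinearMap.fst ℝ EM (F →L[ℝ] F)) p₀ := hasFDerivAt_fst
  have hc : HasFDerivAt (fun p : EM × (F →L[ℝ] F) => ρ p.1)
      ((fderiv ℝ ρ x).comp (ContinuousLinearMap.fst ℝ EM (F →L[ℝ] F))) p₀ :=
    (hρd x).comp p₀ hfst
  have happ : ∀ ζ : F, HasFDerivAt (fun p : EM × (F →L[ℝ] F) => p.2 ζ)
      (((ContinuousLinearMap.apply ℝ F ζ)).comp
        (ContinuousLinearMap.snd ℝ EM (F →L[ℝ] F))) p₀ := fun ζ =>
    (((ContinuousLinearMap.apply ℝ F ζ)).comp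
        (ContinuousLinearMap.snd ℝ EM (F →L[ℝ] F))).hasFDerivAt
  -- first components of B ζ, with explicit derivative
  have hfirst : ∀ ζ : F, HasFDerivAt (fun p : EM × (F →L[ℝ] F) => ρ p.1 (p.2 ζ))
      ((ρ x).comp (((ContinuousLinearMap.apply ℝ F ζ)).comp
          (ContinuousLinearMap.snd ℝ EM (F →L[ℝ] F))) +
        ((fderiv ℝ ρ x).comp (ContinuousLinearMap.fst ℝ EM (F →L[ℝ] F))).flip (gc ζ)) p₀ :=
    fun ζ => hc.clm_apply (happ ζ)
  -- second components of B ζ are differentiable (value of derivative irrelevant)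
  have hsecond : ∀ ζ : F, DifferentiableAt ℝ
      (fun p : EM × (F →L[ℝ] F) => -((ω p.1 (ρ p.1 (p.2 ζ))).comp p.2)) p₀ := by
    intro ζ
    have hωd : DifferentiableAt ℝ (fun p : EM × (F →L[ℝ] F) => ω p.1) p₀ :=
      (HasFDerivAt.comp (g := ω) p₀ (hω.differentiable (by simp) x).hasFDerivAt hfst).differentiableAt
    exact ((hωd.clm_apply (hfirst ζ).differentiableAt).clm_comp
      (differentiable_snd.differentiableAt)).neg
  -- full derivative of B ζ
  have hBd : ∀ ζ : F, HasFDerivAt (B ζ)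
      (((ρ x).comp (((ContinuousLinearMap.apply ℝ F ζ)).comp
          (ContinuousLinearMap.snd ℝ EM (F →L[ℝ] F))) +
        ((fderiv ℝ ρ x).comp (ContinuousLinearMap.fst ℝ EM (F →L[ℝ] F))).flip (gc ζ)).prod
        (fderiv ℝ (fun p : EM × (F →L[ℝ] F) => -((ω p.1 (ρ p.1 (p.2 ζ))).comp p.2)) p₀)) p₀ := by
    intro ζ
    rw [hBfun ζ]
    exact (hfirst ζ).prodMk (hsecond ζ).hasFDerivAt
  -- compute the values of B at p₀
  have hBval : ∀ ζ : F, B ζ p₀ = (ρ x (gc ζ), -((ω x (ρ x (gc ζ))).comp gc)) := fun ζ => hB ζ x gc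
  -- now compute both sides
  simp only [lieBkt, hcov, (hBd ξ).fderiv, (hBd η).fderiv, hF₁.fderiv, hF₂.fderiv,
    hBval, hs₁x, hs₂x]
  simp only [ContinuousLinearMap.add_apply, ContinuousLinearMap.coe_comp', Function.comp_apply,
    ContinuousLinearMap.flip_apply, ContinuousLinearMap.prod_apply, Prod.fst_sub, Prod.fst,
    ContinuousLinearMap.apply_apply, ContinuousLinearMap.coe_snd', ContinuousLinearMap.coe_fst',
    ContinuousLinearMap.neg_apply, ContinuousLinearMap.comp_apply, map_add, map_neg, map_sub,
    hgc, ContinuousLinearEquiv.coe_coe]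
  abel

end
end
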